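/- arXiv:1812.00275 — 5 statements merged into one kernel-verified Lean document; each statement's English description precedes it below -/
import Mathlib

section
/- Every diamond of the graph 𝒢_n (n ≥ 1) either is contained in the power set of {0,…,n−1}, or is contained in the set of subsets of {0,…,n} containing n, or contains exactly two controlling edges; moreover these three classes partition the set of all diamonds of 𝒢_n. -/
/-!
The four vertices of `𝒟(C,a,b)` form the interval from `C` to `C ∪ {a,b}`, so all of them
avoid `n` iff the top vertex does, and all of them contain `n` iff the bottom vertex does.
An edge `(A, A ∪ {y})` with `n ∉ A` is controlling iff `y = n`; hence when `n ∉ C` the diamond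
has two controlling edges if `n ∈ {a, b}` (a pair of parallel edges labelled `n`) and none
otherwise, and when `n ∈ C` it has none.
-/

namespace Finset

variable {α : Type*} [DecidableEq α]

theorem insert_eq_insert_iff_of_notMem {x y : α} {s : Finset α} (hx : x ∉ s) :
    insert y s = insert x s ↔ y = x := by
  rw [eq_comm, insert_inj hx, eq_comm]

theorem notMem_and_insert_eq_insert_iff {x y : α} {s : Finset α} :
    (x ∉ s ∧ insert y s = insert x s) ↔ (x ∉ s ∧ y = x) :=
  and_congr_right insert_eq_insert_iff_of_notMem

end Finset

section Diamond

open Finset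

variable {α : Type*} [DecidableEq α]

theorem notMem_diamond_iff {x a b : α} {C : Finset α} :
    (x ∉ C ∧ x ∉ insert a C ∧ x ∉ insert b C ∧ x ∉ insert a (insert b C)) ↔
      x ∉ insert a (insert b C) := by
  simp only [mem_insert, not_or]
  tauto

theorem mem_diamond_iff {x a b : α} {C : Finset α} :
    (x ∈ C ∧ x ∈ insert a C ∧ x ∈ insert b C ∧ x ∈ insert a (insert b C)) ↔ x ∈ C := by
  simp only [mem_insert]
  tauto

theorem diamond_controllingEdge_count (x a b : α) (C : Finset α) :
    ((if x ∉ C ∧ insert a C = insert x C then 1 else 0) +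
        (if x ∉ C ∧ insert b C = insert x C then 1 else 0) +
        (if x ∉ insert a C ∧ insert b (insert a C) = insert x (insert a C) then 1 else 0) +
        (if x ∉ insert b C ∧ insert a (insert b C) = insert x (insert b C) then 1 else 0) : ℕ) =
      if x ∉ C ∧ (a = x ∨ b = x) then 2 else 0 := by
  simp only [notMem_and_insert_eq_insert_iff]
  by_cases hC : x ∈ C
  · simp [hC]
  by_cases ha : a = x <;> by_cases hb : b = x <;> simp [hC, ha, hb, @eq_comm _ x]

end Diamond

theorem diamond_trichotomy_general (n : ℕ)
    (C : Finset (Fin (n + 1))) (a b : Fin (n + 1)) :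
    -- the four vertices of the diamond are C, insert a C, insert b C, insert a (insert b C)
    ((Fin.last n ∉ C ∧ Fin.last n ∉ insert a C ∧ Fin.last n ∉ insert b C ∧
        Fin.last n ∉ insert a (insert b C)) ∨
      (Fin.last n ∈ C ∧ Fin.last n ∈ insert a C ∧ Fin.last n ∈ insert b C ∧
        Fin.last n ∈ insert a (insert b C)) ∨
      ((if Fin.last n ∉ C ∧ insert a C = insert (Fin.last n) C then 1 else 0) +
        (if Fin.last n ∉ C ∧ insert b C = insert (Fin.last n) C then 1 else 0) +
        (if Fin.last n ∉ insert a C ∧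
            insert b (insert a C) = insert (Fin.last n) (insert a C) then 1 else 0) +
        (if Fin.last n ∉ insert b C ∧
            insert a (insert b C) = insert (Fin.last n) (insert b C) then 1 else 0) = 2)) ∧
    ¬((Fin.last n ∉ C ∧ Fin.last n ∉ insert a C ∧ Fin.last n ∉ insert b C ∧
        Fin.last n ∉ insert a (insert b C)) ∧
      (Fin.last n ∈ C ∧ Fin.last n ∈ insert a C ∧ Fin.last n ∈ insert b C ∧
        Fin.last n ∈ insert a (insert b C))) ∧
    ¬((Fin.last n ∉ C ∧ Fin.last n ∉ insert a C ∧ Fin.last n ∉ insert b C ∧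
        Fin.last n ∉ insert a (insert b C)) ∧
      ((if Fin.last n ∉ C ∧ insert a C = insert (Fin.last n) C then 1 else 0) +
        (if Fin.last n ∉ C ∧ insert b C = insert (Fin.last n) C then 1 else 0) +
        (if Fin.last n ∉ insert a C ∧
            insert b (insert a C) = insert (Fin.last n) (insert a C) then 1 else 0) +
        (if Fin.last n ∉ insert b C ∧
            insert a (insert b C) = insert (Fin.last n) (insert b C) then 1 else 0) = 2)) ∧
    ¬((Fin.last n ∈ C ∧ Fin.last n ∈ insert a C ∧ Fin.last n ∈ insert b C ∧
        Fin.last n ∈ insert a (insert b C)) ∧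
      ((if Fin.last n ∉ C ∧ insert a C = insert (Fin.last n) C then 1 else 0) +
        (if Fin.last n ∉ C ∧ insert b C = insert (Fin.last n) C then 1 else 0) +
        (if Fin.last n ∉ insert a C ∧
            insert b (insert a C) = insert (Fin.last n) (insert a C) then 1 else 0) +
        (if Fin.last n ∉ insert b C ∧
            insert a (insert b C) = insert (Fin.last n) (insert b C) then 1 else 0) = 2)) := by
  rw [notMem_diamond_iff, mem_diamond_iff, diamond_controllingEdge_count]
  by_cases hC : Fin.last n ∈ C <;> simp [hC, eq_comm]
  tauto

/-- every diamond `𝒟(C,a,b)` of the graph `𝒢_n` (vertices: subsets of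
`[n] = {0,…,n}`, modeled as `Fin (n+1)`, adjacency: covering pairs) either is
contained in the power set of `[n-1]` (no vertex contains `n = Fin.last n`), or is
contained in `2^[n] − 2^[n-1]` (every vertex contains `n`), or contains exactly two
controlling edges; and these three classes are pairwise exclusive. A controlling
edge is an edge of the form `(A, A ∪ {n})` with `n ∉ A`. -/
theorem diamond_trichotomy (n : ℕ) (hn : 1 ≤ n)
    (C : Finset (Fin (n + 1))) (a b : Fin (n + 1))
    (ha : a ∉ C) (hb : b ∉ C) (hab : a ≠ b) :
    -- the four vertices of the diamond are C, insert a C, insert b C, insert a (insert b C)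
    ((Fin.last n ∉ C ∧ Fin.last n ∉ insert a C ∧ Fin.last n ∉ insert b C ∧
        Fin.last n ∉ insert a (insert b C)) ∨
      (Fin.last n ∈ C ∧ Fin.last n ∈ insert a C ∧ Fin.last n ∈ insert b C ∧
        Fin.last n ∈ insert a (insert b C)) ∨
      ((if Fin.last n ∉ C ∧ insert a C = insert (Fin.last n) C then 1 else 0) +
        (if Fin.last n ∉ C ∧ insert b C = insert (Fin.last n) C then 1 else 0) +
        (if Fin.last n ∉ insert a C ∧
            insert b (insert a C) = insert (Fin.last n) (insert a C) then 1 else 0) +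
        (if Fin.last n ∉ insert b C ∧
            insert a (insert b C) = insert (Fin.last n) (insert b C) then 1 else 0) = 2)) ∧
    ¬((Fin.last n ∉ C ∧ Fin.last n ∉ insert a C ∧ Fin.last n ∉ insert b C ∧
        Fin.last n ∉ insert a (insert b C)) ∧
      (Fin.last n ∈ C ∧ Fin.last n ∈ insert a C ∧ Fin.last n ∈ insert b C ∧
        Fin.last n ∈ insert a (insert b C))) ∧
    ¬((Fin.last n ∉ C ∧ Fin.last n ∉ insert a C ∧ Fin.last n ∉ insert b C ∧
        Fin.last n ∉ insert a (insert b C)) ∧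
      ((if Fin.last n ∉ C ∧ insert a C = insert (Fin.last n) C then 1 else 0) +
        (if Fin.last n ∉ C ∧ insert b C = insert (Fin.last n) C then 1 else 0) +
        (if Fin.last n ∉ insert a C ∧
            insert b (insert a C) = insert (Fin.last n) (insert a C) then 1 else 0) +
        (if Fin.last n ∉ insert b C ∧
            insert a (insert b C) = insert (Fin.last n) (insert b C) then 1 else 0) = 2)) ∧
    ¬((Fin.last n ∈ C ∧ Fin.last n ∈ insert a C ∧ Fin.last n ∈ insert b C ∧
        Fin.last n ∈ insert a (insert b C)) ∧
      ((if Fin.last n ∉ C ∧ insert a C = insert (Fin.last n) C then 1 else 0) +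
        (if Fin.last n ∉ C ∧ insert b C = insert (Fin.last n) C then 1 else 0) +
        (if Fin.last n ∉ insert a C ∧
            insert b (insert a C) = insert (Fin.last n) (insert a C) then 1 else 0) +
        (if Fin.last n ∉ insert b C ∧
            insert a (insert b C) = insert (Fin.last n) (insert b C) then 1 else 0) = 2)) :=
  diamond_trichotomy_general n C a b
end

section
/- (Rihanna's Lemma) For n ≥ 1: given any oddly acyclic orientation of the subgraph 𝒢_{n−1} of 𝒢_n and any orientation of the controlling edges of 𝒢_n, there exists a unique orientation of 𝒢_n extending both which is oddly acyclic. -/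
/-- An orientation of `𝒢_n`: `o A b = true` means the edge between `A` and
`insert b A` is directed from `A` to `insert b A` (only relevant when `b ∉ A`). -/
def GraphOrientation (n : ℕ) : Type := Finset (Fin (n + 1)) → Fin (n + 1) → Bool

/-- The diamond `𝒟(C,a,b)` (on vertices `C`, `C∪{a}`, `C∪{b}`, `C∪{a,b}`), with the
directions induced by the orientation `o`, is acyclic and contains a directed path of
length 3.  For an orientation of a 4-cycle, this holds precisely when an odd number of
the four edges point "upwards". -/
def OddlyAcyclicDiamond {n : ℕ} (o : GraphOrientation n) (C : Finset (Fin (n + 1)))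
    (a b : Fin (n + 1)) : Prop :=
  xor (o C a) (xor (o C b) (xor (o (insert a C) b) (o (insert b C) a))) = true

/-- `o` is an oddly acyclic orientation of `𝒢_n`. -/
def OddlyAcyclic {n : ℕ} (o : GraphOrientation n) : Prop :=
  ∀ (C : Finset (Fin (n + 1))) (a b : Fin (n + 1)),
    a ∉ C → b ∉ C → a ≠ b → OddlyAcyclicDiamond o C a b

/-!
Write `n` for `Fin.last n`. For `n ∉ D` and `b ∉ D ∪ {n}`, the diamond `𝒟(D, b, n)` consists of
the edge `D — D ∪ {b}` of `𝒢_{n-1}`, the two controlling edges at `D` and `D ∪ {b}`, and the edge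
`D ∪ {n} — D ∪ {b, n}`. Being oddly acyclic is a parity condition on the four edges, so it forces
the direction of the last edge: the extension is unique, and there is a single candidate.
In a diamond `𝒟(C, a, b)` with `n ∈ C`, every edge of the candidate is the negated sum of an edge
of `𝒢_{n-1}` and two controlling edges; each controlling edge occurs twice, so the parity is that
of the diamond `𝒟(C \ {n}, a, b)` of `o'`.
-/

open Finset

theorem Bool.xor_xor_xor_eq_true_iff (p t u x : Bool) :
    (p ^^ (t ^^ (u ^^ x))) = true ↔ x = !(p ^^ t ^^ u) := by
  revert p t u x; decide

namespace GraphOrientation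

variable {n : ℕ}

theorem xor_liftedDiamond_eq (p q r s t u v w : Bool) :
    (!(p ^^ t ^^ u) ^^ (!(q ^^ t ^^ v) ^^ (!(r ^^ u ^^ w) ^^ !(s ^^ v ^^ w)))) =
      (p ^^ (q ^^ (r ^^ s))) := by
  revert p q r s t u v w; decide

theorem oddlyAcyclicDiamond_comm {o : GraphOrientation n} {C : Finset (Fin (n + 1))}
    {a b : Fin (n + 1)} : OddlyAcyclicDiamond o C a b ↔ OddlyAcyclicDiamond o C b a := by
  unfold OddlyAcyclicDiamond
  rw [Bool.xor_left_comm, Bool.xor_comm (o (insert a C) b)]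

def OddlyAcyclicBelowLast (o' : GraphOrientation n) : Prop :=
  ∀ (C : Finset (Fin (n + 1))) (a b : Fin (n + 1)), Fin.last n ∉ C → a ≠ Fin.last n →
    b ≠ Fin.last n → a ∉ C → b ∉ C → a ≠ b → OddlyAcyclicDiamond o' C a b

def extend (o' : GraphOrientation n) (c : Finset (Fin (n + 1)) → Bool) : GraphOrientation n :=
  fun A b =>
    if Fin.last n ∈ A then
      !(o' (A.erase (Fin.last n)) b ^^ c (A.erase (Fin.last n)) ^^
        c (insert b (A.erase (Fin.last n))))
    else if b = Fin.last n then c A else o' A b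

section extend

variable {o' : GraphOrientation n} {c : Finset (Fin (n + 1)) → Bool} {A : Finset (Fin (n + 1))}
  {b : Fin (n + 1)}

theorem extend_of_last_notMem (hA : Fin.last n ∉ A) (hb : b ≠ Fin.last n) :
    extend o' c A b = o' A b := by
  simp [extend, hA, hb]

theorem extend_last (hA : Fin.last n ∉ A) : extend o' c A (Fin.last n) = c A := by
  simp [extend, hA]

theorem extend_of_last_mem (hA : Fin.last n ∈ A) :
    extend o' c A b =
      !(o' (A.erase (Fin.last n)) b ^^ c (A.erase (Fin.last n)) ^^
        c (insert b (A.erase (Fin.last n)))) := by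
  simp [extend, hA]

theorem eq_extend_of_oddlyAcyclic {o : GraphOrientation n}
    (ho' : ∀ A b, b ∉ A → b ≠ Fin.last n → Fin.last n ∉ A → o A b = o' A b)
    (hc : ∀ A, Fin.last n ∉ A → o A (Fin.last n) = c A) (ho : OddlyAcyclic o) (hb : b ∉ A) :
    o A b = extend o' c A b := by
  by_cases hA : Fin.last n ∈ A
  · set D := A.erase (Fin.last n)
    have hbL : b ≠ Fin.last n := by rintro rfl; exact hb hA
    have hbD : b ∉ D := fun h => hb (mem_of_mem_erase h)
    have hLD : Fin.last n ∉ D := notMem_erase _ _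
    have hLbD : Fin.last n ∉ insert b D := by simp [hLD, hbL.symm]
    have hdiamond := ho D b (Fin.last n) hbD hLD hbL
    rw [OddlyAcyclicDiamond, ho' _ _ hbD hbL hLD, hc _ hLD, hc _ hLbD, insert_erase hA]
      at hdiamond
    rw [extend_of_last_mem hA]
    exact (Bool.xor_xor_xor_eq_true_iff _ _ _ _).mp hdiamond
  · by_cases hbL : b = Fin.last n
    · rw [hbL, hc A hA, extend_last hA]
    · rw [ho' A b hb hbL hA, extend_of_last_notMem hA hbL]

theorem oddlyAcyclicDiamond_extend_last {C : Finset (Fin (n + 1))} {a : Fin (n + 1)}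
    (hC : Fin.last n ∉ C) (ha : a ≠ Fin.last n) :
    OddlyAcyclicDiamond (extend o' c) C a (Fin.last n) := by
  have hLaC : Fin.last n ∉ insert a C := by simp [hC, ha.symm]
  rw [OddlyAcyclicDiamond, extend_of_last_notMem hC ha, extend_last hC, extend_last hLaC,
    extend_of_last_mem (mem_insert_self _ _), erase_insert hC]
  exact (Bool.xor_xor_xor_eq_true_iff _ _ _ _).mpr rfl

theorem oddlyAcyclicDiamond_extend_of_last_mem
    (h' : OddlyAcyclicBelowLast o')
    {C : Finset (Fin (n + 1))} {a b : Fin (n + 1)} (hC : Fin.last n ∈ C) (ha : a ∉ C)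
    (hb : b ∉ C) (hab : a ≠ b) : OddlyAcyclicDiamond (extend o' c) C a b := by
  set D := C.erase (Fin.last n)
  have haL : a ≠ Fin.last n := by rintro rfl; exact ha hC
  have hbL : b ≠ Fin.last n := by rintro rfl; exact hb hC
  have hdiamond := h' D a b (notMem_erase _ _) haL hbL (fun h => ha (mem_of_mem_erase h))
    (fun h => hb (mem_of_mem_erase h)) hab
  rw [OddlyAcyclicDiamond] at hdiamond ⊢
  rw [extend_of_last_mem hC, extend_of_last_mem hC, extend_of_last_mem (mem_insert_of_mem hC),
    extend_of_last_mem (mem_insert_of_mem hC), erase_insert_of_ne haL, erase_insert_of_ne hbL,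
    insert_comm a b D]
  rwa [xor_liftedDiamond_eq]

theorem oddlyAcyclic_extend
    (h' : OddlyAcyclicBelowLast o') :
    OddlyAcyclic (extend o' c) := by
  intro C a b ha hb hab
  by_cases hC : Fin.last n ∈ C
  · exact oddlyAcyclicDiamond_extend_of_last_mem h' hC ha hb hab
  by_cases haL : a = Fin.last n
  · subst haL
    exact oddlyAcyclicDiamond_comm.mp (oddlyAcyclicDiamond_extend_last hC (Ne.symm hab))
  by_cases hbL : b = Fin.last n
  · subst hbL
    exact oddlyAcyclicDiamond_extend_last hC haL
  have hLaC : Fin.last n ∉ insert a C := by simp [hC, Ne.symm haL]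
  have hLbC : Fin.last n ∉ insert b C := by simp [hC, Ne.symm hbL]
  rw [OddlyAcyclicDiamond, extend_of_last_notMem hC haL, extend_of_last_notMem hC hbL,
    extend_of_last_notMem hLaC hbL, extend_of_last_notMem hLbC haL]
  exact h' C a b hC haL hbL ha hb hab

end extend

end GraphOrientation

open GraphOrientation in
theorem rihanna_general (n : ℕ) (o' : GraphOrientation n)
    (h' : ∀ (C : Finset (Fin (n + 1))) (a b : Fin (n + 1)),
      Fin.last n ∉ C → a ≠ Fin.last n → b ≠ Fin.last n →
      a ∉ C → b ∉ C → a ≠ b → OddlyAcyclicDiamond o' C a b)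
    (c : Finset (Fin (n + 1)) → Bool) :
    ∃ o : GraphOrientation n,
      ((∀ (A : Finset (Fin (n + 1))) (b : Fin (n + 1)),
          b ∉ A → b ≠ Fin.last n → Fin.last n ∉ A → o A b = o' A b) ∧
        (∀ A : Finset (Fin (n + 1)), Fin.last n ∉ A → o A (Fin.last n) = c A) ∧
        OddlyAcyclic o) ∧
      ∀ o₂ : GraphOrientation n,
        ((∀ (A : Finset (Fin (n + 1))) (b : Fin (n + 1)),
            b ∉ A → b ≠ Fin.last n → Fin.last n ∉ A → o₂ A b = o' A b) ∧
          (∀ A : Finset (Fin (n + 1)), Fin.last n ∉ A → o₂ A (Fin.last n) = c A) ∧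
          OddlyAcyclic o₂) →
        ∀ (A : Finset (Fin (n + 1))) (b : Fin (n + 1)), b ∉ A → o₂ A b = o A b :=
  ⟨extend o' c,
    ⟨fun _ _ _ hb hA => extend_of_last_notMem hA hb, fun _ hA => extend_last hA,
      oddlyAcyclic_extend h'⟩,
    fun _ ⟨ho', hc, ho⟩ _ _ hb => eq_extend_of_oddlyAcyclic ho' hc ho hb⟩

/-- Rihanna's Lemma: given an oddly acyclic orientation `o'` of the
subgraph `𝒢_{n-1}` (the induced subgraph on subsets not containing `n = Fin.last n`)
and an arbitrary orientation `c` of the controlling edges (`c A` is the direction of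
the edge between `A` and `A ∪ {n}`, for `n ∉ A`), there is a unique oddly acyclic
orientation of `𝒢_n` extending both. -/
theorem rihanna (n : ℕ) (hn : 1 ≤ n) (o' : GraphOrientation n)
    (h' : ∀ (C : Finset (Fin (n + 1))) (a b : Fin (n + 1)),
      Fin.last n ∉ C → a ≠ Fin.last n → b ≠ Fin.last n →
      a ∉ C → b ∉ C → a ≠ b → OddlyAcyclicDiamond o' C a b)
    (c : Finset (Fin (n + 1)) → Bool) :
    ∃ o : GraphOrientation n,
      ((∀ (A : Finset (Fin (n + 1))) (b : Fin (n + 1)),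
          b ∉ A → b ≠ Fin.last n → Fin.last n ∉ A → o A b = o' A b) ∧
        (∀ A : Finset (Fin (n + 1)), Fin.last n ∉ A → o A (Fin.last n) = c A) ∧
        OddlyAcyclic o) ∧
      ∀ o₂ : GraphOrientation n,
        ((∀ (A : Finset (Fin (n + 1))) (b : Fin (n + 1)),
            b ∉ A → b ≠ Fin.last n → Fin.last n ∉ A → o₂ A b = o' A b) ∧
          (∀ A : Finset (Fin (n + 1)), Fin.last n ∉ A → o₂ A (Fin.last n) = c A) ∧
          OddlyAcyclic o₂) →
        ∀ (A : Finset (Fin (n + 1))) (b : Fin (n + 1)), b ∉ A → o₂ A b = o A b :=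
  rihanna_general n o' h' c
end

section
/- For every n ≥ 1 there exists an orientation of 𝒢_n that is oddly acyclic, positively swapped, and such that for every two-element subset A = {a,b} of [n] with a < b, the edge between A and {b} is directed from A to {b} = {max(A)}. -/
/-- `o` is positively swapped: for `a < b` in `[n]`, the induced directed subgraph on
the vertices `{a,b}`, `{a}`, `{b}` is a directed path of length 2 (i.e. its two edges
point in "consistent" directions through `{a,b}`) iff `0 < a`. -/
def PositivelySwapped {n : ℕ} (o : GraphOrientation n) : Prop :=
  ∀ a b : Fin (n + 1), a < b → ((o {a} b ≠ o {b} a) ↔ 0 < a)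

/-!
Orienting the edge `C → C ∪ {a}` upwards iff an odd number of elements of `C` exceed `a`
gives an oddly acyclic orientation: in the diamond `𝒟(C,a,b)` the two parallel edge pairs
differ exactly by the comparisons `b < a` and `a < b`, of which exactly one holds. The parity
of a diamond is unchanged if every edge `C → C ∪ {a}` is further flipped by `g a ^^ φ C ^^
φ (C ∪ {a})`, since each element labels two edges and each vertex lies on two edges of the
diamond. A suitable `g` and `φ` fix the directions required on the bottom two layers.
-/

open Finset

namespace GraphOrientation

variable {n : ℕ}

def inversions (n : ℕ) : GraphOrientation n := fun C a => decide (Odd #{c ∈ C | a < c})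

theorem inversions_insert {C : Finset (Fin (n + 1))} {a : Fin (n + 1)} (ha : a ∉ C)
    (b : Fin (n + 1)) : inversions n (insert a C) b = (inversions n C b ^^ decide (b < a)) := by
  by_cases hba : b < a
  · have ha' : a ∉ {c ∈ C | b < c} := fun h => ha (mem_filter.mp h).1
    simp [inversions, filter_insert, hba, card_insert_of_notMem ha', Nat.odd_add_one,
      ← Nat.not_even_iff_odd]
  · simp [inversions, filter_insert, hba]

theorem oddlyAcyclic_inversions (n : ℕ) : OddlyAcyclic (inversions n) := by
  intro C a b ha hb hab
  unfold OddlyAcyclicDiamond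
  rw [inversions_insert ha, inversions_insert hb]
  rcases hab.lt_or_gt with h | h <;> simp [h, h.not_gt]

def twist (o : GraphOrientation n) (g : Fin (n + 1) → Bool)
    (φ : Finset (Fin (n + 1)) → Bool) : GraphOrientation n :=
  fun C a => o C a ^^ g a ^^ φ C ^^ φ (insert a C)

end GraphOrientation

open GraphOrientation

section

variable {n : ℕ}

theorem OddlyAcyclic.twist {o : GraphOrientation n} (ho : OddlyAcyclic o)
    (g : Fin (n + 1) → Bool) (φ : Finset (Fin (n + 1)) → Bool) :
    OddlyAcyclic (o.twist g φ) := by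
  intro C a b ha hb hab
  have hdiamond := ho C a b ha hb hab
  unfold OddlyAcyclicDiamond at hdiamond ⊢
  simp only [GraphOrientation.twist, insert_comm b a C]
  have cancel : ∀ x₁ x₂ x₃ x₄ g₁ g₂ p p₁ p₂ p₁₂ : Bool,
      ((x₁ ^^ g₁ ^^ p ^^ p₁) ^^ ((x₂ ^^ g₂ ^^ p ^^ p₂) ^^
        ((x₃ ^^ g₂ ^^ p₁ ^^ p₁₂) ^^ (x₄ ^^ g₁ ^^ p₂ ^^ p₁₂)))) = (x₁ ^^ (x₂ ^^ (x₃ ^^ x₄))) := by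
    decide
  exact (cancel ..).trans hdiamond

/- Relative to `inversions`, `g` flips every edge adding a nonzero element and `φ` flips the two
edges into each `{0, b}`; this leaves `{a} → {a, b}` upwards iff `a ≠ 0`, and `{b} → {a, b}`
downwards. -/
def goodOrientation (n : ℕ) : GraphOrientation n :=
  (inversions n).twist (fun a => decide (a ≠ 0)) (fun C => decide (#C = 2 ∧ 0 ∈ C))

variable {a b : Fin (n + 1)}

theorem goodOrientation_singleton_max (hab : a < b) : goodOrientation n {b} a = false := by
  have hb : 0 < b := (Fin.zero_le a).trans_lt hab
  by_cases ha : a = 0 <;>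
    simp [goodOrientation, twist, inversions, filter_singleton, hab, ha, hb, hb.ne',
      card_pair hab.ne, eq_comm (a := (0 : Fin (n + 1)))]

theorem goodOrientation_singleton_min (hab : a < b) :
    goodOrientation n {a} b = decide (a ≠ 0) := by
  have hb : 0 < b := (Fin.zero_le a).trans_lt hab
  by_cases ha : a = 0 <;>
    simp [goodOrientation, twist, inversions, filter_singleton, hab.not_gt, ha, hb.ne',
      card_pair hab.ne', eq_comm (a := (0 : Fin (n + 1)))]

theorem positivelySwapped_goodOrientation (n : ℕ) : PositivelySwapped (goodOrientation n) := by
  intro a b hab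
  rw [goodOrientation_singleton_min hab, goodOrientation_singleton_max hab,
    Fin.pos_iff_ne_zero]
  simp

end

theorem exists_good_orientation_general (n : ℕ) :
    ∃ o : GraphOrientation n, OddlyAcyclic o ∧ PositivelySwapped o ∧
      ∀ a b : Fin (n + 1), a < b → o {b} a = false :=
  ⟨goodOrientation n, (oddlyAcyclic_inversions n).twist _ _,
    positivelySwapped_goodOrientation n, fun _ _ => goodOrientation_singleton_max⟩

/-- for every `n ≥ 1` there is an oddly acyclic, positively swapped
orientation of `𝒢_n` such that for every 2-element subset `A = {a,b}` (`a < b`),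
the edge between `A` and `{b} = {max A}` is directed from `A` to `{b}`. -/
theorem exists_good_orientation (n : ℕ) (hn : 1 ≤ n) :
    ∃ o : GraphOrientation n, OddlyAcyclic o ∧ PositivelySwapped o ∧
      ∀ a b : Fin (n + 1), a < b → o {b} a = false :=
  exists_good_orientation_general n
end

section
/- For a fully nondegenerate bilinear map t : U₂ × U₁ → U₀ over a commutative ring K, the centroid Cen(t) = {(ω₂,ω₁,ω₀) ∈ End(U₂)×End(U₁)×End(U₀) : ω₀⟨t|u₂,u₁⟩ = ⟨t|ω₂u₂,u₁⟩ = ⟨t|u₂,ω₁u₁⟩ for all u₂,u₁} is a commutative subring of End(U₂)×End(U₁)×End(U₀). -/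
/-! Write `ω = (ω₂, ω₁, ω₀)`. For `x, y` in the centroid, moving `x` and `y` across `t` gives
`x₀ y₀ ⟨t|u₂,u₁⟩ = ⟨t|x₂u₂, y₁u₁⟩ = y₀ x₀ ⟨t|u₂,u₁⟩`, so `x₀` and `y₀` commute on the image of `t`,
hence on `U₀` because `t` is full. Then `⟨t|x₂y₂u₂, u₁⟩ = x₀ y₀ ⟨t|u₂,u₁⟩` is symmetric in `x, y`,
and nondegeneracy in the first slot gives `x₂ y₂ = y₂ x₂`; likewise `x₁ y₁ = y₁ x₁`. -/

namespace LinearMap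

variable {K U₂ U₁ U₀ : Type*} [CommSemiring K] [AddCommGroup U₂] [AddCommGroup U₁]
  [AddCommGroup U₀] [Module K U₂] [Module K U₁] [Module K U₀] (t : U₂ →ₗ[K] U₁ →ₗ[K] U₀)

def centroid : Subring (Module.End K U₂ × Module.End K U₁ × Module.End K U₀) where
  carrier := {ω | ∀ u₂ u₁, ω.2.2 (t u₂ u₁) = t (ω.1 u₂) u₁ ∧ ω.2.2 (t u₂ u₁) = t u₂ (ω.2.1 u₁)}
  one_mem' _ _ := ⟨rfl, rfl⟩
  zero_mem' _ _ := by simp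
  mul_mem' {x y} hx hy u₂ u₁ :=
    ⟨by simp [(hy u₂ u₁).1, (hx _ u₁).1], by simp [(hy u₂ u₁).2, (hx u₂ _).2]⟩
  add_mem' {x y} hx hy u₂ u₁ :=
    ⟨by simp [(hx u₂ u₁).1, (hy u₂ u₁).1], by simp [(hx u₂ u₁).2, (hy u₂ u₁).2]⟩
  neg_mem' {x} hx u₂ u₁ := ⟨by simp [(hx u₂ u₁).1], by simp [(hx u₂ u₁).2]⟩

variable {t} {x y : Module.End K U₂ × Module.End K U₁ × Module.End K U₀}

theorem centroid_mul_apply_left (hx : x ∈ t.centroid) (hy : y ∈ t.centroid)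
    (u₂ : U₂) (u₁ : U₁) :
    t ((x.1 * y.1) u₂) u₁ = (x.2.2 * y.2.2) (t u₂ u₁) := by
  rw [Module.End.mul_apply, Module.End.mul_apply, (hy u₂ u₁).1, (hx _ u₁).1]

theorem centroid_mul_apply_right (hx : x ∈ t.centroid) (hy : y ∈ t.centroid)
    (u₂ : U₂) (u₁ : U₁) :
    t u₂ ((x.2.1 * y.2.1) u₁) = (x.2.2 * y.2.2) (t u₂ u₁) := by
  rw [Module.End.mul_apply, Module.End.mul_apply, (hy u₂ u₁).2, (hx u₂ _).2]

theorem commute_centroid_codomain (hx : x ∈ t.centroid) (hy : y ∈ t.centroid)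
    (hfull : Submodule.span K {w : U₀ | ∃ u₂ u₁, t u₂ u₁ = w} = ⊤) :
    x.2.2 * y.2.2 = y.2.2 * x.2.2 := by
  refine LinearMap.ext_on hfull ?_
  rintro _ ⟨u₂, u₁, rfl⟩
  calc x.2.2 (y.2.2 (t u₂ u₁)) = t (x.1 u₂) (y.2.1 u₁) := by rw [(hy u₂ u₁).2, (hx u₂ _).1]
    _ = y.2.2 (x.2.2 (t u₂ u₁)) := by rw [(hx u₂ u₁).1, (hy _ u₁).2]

theorem commute_centroid_left (hx : x ∈ t.centroid) (hy : y ∈ t.centroid)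
    (hl : t.SeparatingLeft) (h₀ : x.2.2 * y.2.2 = y.2.2 * x.2.2) :
    x.1 * y.1 = y.1 * x.1 := by
  ext u₂
  refine sub_eq_zero.mp (hl _ fun u₁ => ?_)
  rw [map_sub, sub_apply, centroid_mul_apply_left hx hy, centroid_mul_apply_left hy hx, h₀,
    sub_self]

theorem commute_centroid_right (hx : x ∈ t.centroid) (hy : y ∈ t.centroid)
    (hr : t.SeparatingRight) (h₀ : x.2.2 * y.2.2 = y.2.2 * x.2.2) :
    x.2.1 * y.2.1 = y.2.1 * x.2.1 := by
  ext u₁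
  refine sub_eq_zero.mp (hr _ fun u₂ => ?_)
  rw [map_sub, centroid_mul_apply_right hx hy, centroid_mul_apply_right hy hx, h₀, sub_self]

theorem centroid_mul_comm (hfull : Submodule.span K {w : U₀ | ∃ u₂ u₁, t u₂ u₁ = w} = ⊤)
    (hnd : t.Nondegenerate) (hx : x ∈ t.centroid) (hy : y ∈ t.centroid) : x * y = y * x :=
  have h₀ := commute_centroid_codomain hx hy hfull
  Prod.ext (commute_centroid_left hx hy hnd.1 h₀) <|
    Prod.ext (commute_centroid_right hx hy hnd.2 h₀) h₀

end LinearMap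

/-- for a fully nondegenerate bilinear map `t : U₂ × U₁ → U₀` of
`K`-modules, the centroid is a commutative subring of `End(U₂) × End(U₁) × End(U₀)`. -/
theorem centroid_commutative_subring (K : Type) [CommRing K]
    (U₂ U₁ U₀ : Type) [AddCommGroup U₂] [AddCommGroup U₁] [AddCommGroup U₀]
    [Module K U₂] [Module K U₁] [Module K U₀]
    (t : U₂ →ₗ[K] U₁ →ₗ[K] U₀)
    -- full: the image of t spans U₀
    (hfull : Submodule.span K {w : U₀ | ∃ u₂ u₁, t u₂ u₁ = w} = ⊤)
    -- nondegenerate in each input slot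
    (hnd₂ : ∀ u₂ : U₂, (∀ u₁ : U₁, t u₂ u₁ = 0) → u₂ = 0)
    (hnd₁ : ∀ u₁ : U₁, (∀ u₂ : U₂, t u₂ u₁ = 0) → u₁ = 0) :
    ∃ S : Subring (Module.End K U₂ × Module.End K U₁ × Module.End K U₀),
      (S : Set (Module.End K U₂ × Module.End K U₁ × Module.End K U₀)) =
        {ω | ∀ u₂ u₁, ω.2.2 (t u₂ u₁) = t (ω.1 u₂) u₁ ∧
              ω.2.2 (t u₂ u₁) = t u₂ (ω.2.1 u₁)} ∧
      ∀ x ∈ S, ∀ y ∈ S, x * y = y * x := by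
  exact ⟨t.centroid, rfl, fun _ hx _ hy => LinearMap.centroid_mul_comm hfull ⟨hnd₂, hnd₁⟩ hx hy⟩
end

section
/- The trilinear forms GHZ and W on ℂ² × ℂ² × ℂ² are not equivalent: there is no triple (α₂, α₁, α₀) of invertible linear maps on ℂ² and nonzero scalar λ such that λ·⟨GHZ|x,y,z⟩ = ⟨W|α₂x, α₁y, α₀z⟩ for all x, y, z. -/
/-!
Fixing the first argument `x` turns a trilinear form on `ℂ²` into a bilinear form, whose Gram
determinant is a quadratic form in `x`. For `GHZ` it is `x₀x₁/2`, a product of two independent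
linear forms; for `W` it is a multiple of `x₀²`, even after composing `W` with arbitrary maps in
the last two arguments. An equivalence would therefore write `x₀x₁` as a multiple of the square
of a linear form, which vanishes at both basis vectors but not at their sum.
-/

/-- The GHZ state as a trilinear form: `⟨GHZ|x,y,z⟩ = (√2/2)(x₀y₀z₀ + x₁y₁z₁)`. -/
noncomputable def GHZform (x y z : Fin 2 → ℂ) : ℂ :=
  ((Real.sqrt 2 : ℝ) : ℂ) / 2 * (x 0 * y 0 * z 0 + x 1 * y 1 * z 1)

/-- The W state as a trilinear form: `⟨W|x,y,z⟩ = (√3/3)(x₁y₀z₀ + x₀y₁z₀ + x₀y₀z₁)`. -/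
noncomputable def Wform (x y z : Fin 2 → ℂ) : ℂ :=
  ((Real.sqrt 3 : ℝ) : ℂ) / 3 * (x 1 * y 0 * z 0 + x 0 * y 1 * z 0 + x 0 * y 0 * z 1)

lemma Complex.ofReal_sqrt_ofNat_sq (n : ℕ) [n.AtLeastTwo] :
    ((Real.sqrt (OfNat.ofNat n) : ℝ) : ℂ) ^ 2 = OfNat.ofNat n := by
  rw [← Complex.ofReal_pow, Real.sq_sqrt (Nat.ofNat_nonneg _), Complex.ofReal_ofNat]

section SliceDet

variable {K V : Type*} [CommRing K]

/-- The Gram determinant, in the standard basis, of the bilinear form `f x`. -/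
def sliceDet (f : V → (Fin 2 → K) → (Fin 2 → K) → K) (x : V) : K :=
  f x (Pi.single 0 1) (Pi.single 0 1) * f x (Pi.single 1 1) (Pi.single 1 1)
    - f x (Pi.single 0 1) (Pi.single 1 1) * f x (Pi.single 1 1) (Pi.single 0 1)

lemma sliceDet_const_mul (f : V → (Fin 2 → K) → (Fin 2 → K) → K) (lam : K) (x : V) :
    sliceDet (fun x y z => lam * f x y z) x = lam ^ 2 * sliceDet f x := by
  simp only [sliceDet]
  ring

lemma not_forall_mul_mul_eq_mul_sq [IsDomain K] (ℓ : (Fin 2 → K) →ₗ[K] K) {a : K} (ha : a ≠ 0)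
    (c : K) : ¬ ∀ x : Fin 2 → K, a * (x 0 * x 1) = c * ℓ x ^ 2 := by
  intro h
  have hsum := h (Pi.single 0 1 + Pi.single 1 1)
  have hc : c ≠ 0 := by
    rintro rfl
    simp [ha] at hsum
  have hℓ : ∀ i, ℓ (Pi.single i 1) = 0 := fun i => by
    have hi := h (Pi.single i 1)
    fin_cases i <;> simpa [hc] using hi.symm
  simp [hℓ, ha] at hsum

end SliceDet

lemma sliceDet_GHZform (x : Fin 2 → ℂ) : sliceDet GHZform x = x 0 * x 1 / 2 := by
  simp only [sliceDet, GHZform, Pi.single_eq_same,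
    Pi.single_eq_of_ne (show (1 : Fin 2) ≠ 0 by decide),
    Pi.single_eq_of_ne (show (0 : Fin 2) ≠ 1 by decide)]
  linear_combination x 0 * x 1 / 4 * Complex.ofReal_sqrt_ofNat_sq 2

lemma Wform_mul_sub_mul (u a b p q : Fin 2 → ℂ) :
    Wform u a p * Wform u b q - Wform u a q * Wform u b p
      = -(1 / 3) * (a 0 * b 1 - a 1 * b 0) * (p 0 * q 1 - p 1 * q 0) * u 0 ^ 2 := by
  simp only [Wform]
  linear_combination (-(a 0 * b 1 - a 1 * b 0) * (p 0 * q 1 - p 1 * q 0) * u 0 ^ 2 / 9) *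
    Complex.ofReal_sqrt_ofNat_sq 3

lemma exists_sliceDet_Wform_comp (α₂ α₁ α₀ : (Fin 2 → ℂ) → (Fin 2 → ℂ)) :
    ∃ c, ∀ x, sliceDet (fun x y z => Wform (α₂ x) (α₁ y) (α₀ z)) x = c * α₂ x 0 ^ 2 :=
  ⟨_, fun x => Wform_mul_sub_mul (α₂ x) _ _ _ _⟩

/-- GHZ and W are inequivalent: there is no triple of invertible
linear maps on `ℂ²` and nonzero scalar `λ` with
`λ·⟨GHZ|x,y,z⟩ = ⟨W|α₂x, α₁y, α₀z⟩` for all `x, y, z`. -/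
theorem GHZ_not_equivalent_W :
    ¬ ∃ (α₂ α₁ α₀ : (Fin 2 → ℂ) ≃ₗ[ℂ] (Fin 2 → ℂ)) (lam : ℂ), lam ≠ 0 ∧
      ∀ x y z : Fin 2 → ℂ, lam * GHZform x y z = Wform (α₂ x) (α₁ y) (α₀ z) := by
  rintro ⟨α₂, α₁, α₀, lam, hlam, h⟩
  obtain ⟨c, hc⟩ := exists_sliceDet_Wform_comp α₂ α₁ α₀
  refine not_forall_mul_mul_eq_mul_sq ((LinearMap.proj 0).comp α₂.toLinearMap)
    (by simpa using hlam : lam ^ 2 / 2 ≠ 0) c fun x => ?_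
  calc lam ^ 2 / 2 * (x 0 * x 1) = lam ^ 2 * sliceDet GHZform x := by
        rw [sliceDet_GHZform]; ring
    _ = sliceDet (fun x y z => Wform (α₂ x) (α₁ y) (α₀ z)) x := by
        rw [← sliceDet_const_mul]; simp only [h]
    _ = c * α₂ x 0 ^ 2 := hc x
end
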